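/- (Lindeberg-type conditions under a drift function.) Let u be a drift function, α ∈ ℝ₊*, g ∈ 𝓔^{2+α}_u and x ∈ 𝐗 with u(x) < ∞. Then: (1) for every ε > 0, (1/n)·Σ_{k=0}^{n−1} 𝔼_x[(g(X_{k+1}) − Pg(X_k))²·𝟙_{|g(X_{k+1}) − Pg(X_k)| ≥ ε√n}] → 0 as n → ∞; (2) for every ε > 0, Σ_{n≥1} n^{−1/2}·𝔼_x[|g(X_{n+1}) − Pg(X_n)|·𝟙_{|g(X_{n+1}) − Pg(X_n)| ≥ ε√n}] < ∞; (3) there exists δ > 0 such that Σ_{n≥1} n^{−2}·𝔼_x[(g(X_{n+1}) − Pg(X_n))⁴·𝟙_{|g(X_{n+1}) − Pg(X_n)| ≤ δ√n}] < ∞. -/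

import Mathlib

open MeasureTheory Filter Set Topology
open scoped ENNReal NNReal ENat

noncomputable section

/-- The shift on path space. -/
def pshift {X : Type*} (ω : ℕ → X) : ℕ → X := fun n => ω (n + 1)

/-- The natural filtration on path space: the σ-algebra generated by the first `n+1`
coordinates. -/
def pathFiltration (X : Type*) [MeasurableSpace X] (n : ℕ) : MeasurableSpace (ℕ → X) :=
  MeasurableSpace.comap (fun ω (i : Fin (n + 1)) => ω (i : ℕ)) inferInstance

/-- A Markov chain on `X`, given by the family of its path-space laws `ℙ_x`. -/
structure MarkovChain (X : Type*) [MeasurableSpace X] where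
  law : X → Measure (ℕ → X)
  prob : ∀ x, IsProbabilityMeasure (law x)
  meas_law : Measurable law
  start : ∀ x, (law x).map (fun ω => ω 0) = Measure.dirac x
  markov : ∀ (x : X) (n : ℕ) (A : Set (ℕ → X)),
      MeasurableSet[pathFiltration X n] A → ∀ g : (ℕ → X) → ℝ≥0∞, Measurable g →
      ∫⁻ ω in A, g (fun k => ω (k + n)) ∂law x = ∫⁻ ω in A, ∫⁻ η, g η ∂law (ω n) ∂law x

variable {X : Type*} [MeasurableSpace X]

/-- A stopping time on path space, with values in `ℕ∞`. -/
def IsPathStoppingTime (τ : (ℕ → X) → ℕ∞) : Prop :=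
  ∀ n : ℕ, MeasurableSet[pathFiltration X n] {ω | τ ω = (n : ℕ∞)}

/-- `τ` is θ-compatible: `ℙ_x(τ = 0) = 0` and, almost everywhere, `τ ≥ 2` implies
`τ ∘ θ = τ - 1`. -/
def ThetaCompatible (M : MarkovChain X) (τ : (ℕ → X) → ℕ∞) : Prop :=
  (∀ x, M.law x {ω | τ ω = 0} = 0) ∧
    ∀ x, ∀ᵐ ω ∂M.law x, 2 ≤ τ ω → τ (pshift ω) = τ ω - 1

/-- The Markov operator `P` on nonnegative functions: `Pf(x) = 𝔼_x f(X_1)`. -/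
def Pop (M : MarkovChain X) (f : X → ℝ≥0∞) (x : X) : ℝ≥0∞ := ∫⁻ ω, f (ω 1) ∂M.law x

/-- The induced operator `Q`: `Qg(x) = ∫_{τ<∞} g(X_τ) dℙ_x`. -/
def Qop (M : MarkovChain X) (τ : (ℕ → X) → ℕ∞) (g : X → ℝ≥0∞) (x : X) : ℝ≥0∞ :=
  ∫⁻ ω in {ω | τ ω ≠ ⊤}, g (ω (τ ω).toNat) ∂M.law x

/-- The operator `S`: `Sf(x) = ∫_{τ=1} f(X_1) dℙ_x`. -/
def Sop (M : MarkovChain X) (τ : (ℕ → X) → ℕ∞) (f : X → ℝ≥0∞) (x : X) : ℝ≥0∞ :=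
  ∫⁻ ω in {ω | τ ω = 1}, f (ω 1) ∂M.law x

/-- The operator `R`: `Rf(x) = ∫_{τ<∞} (f(X_0) + ⋯ + f(X_{τ-1})) dℙ_x`. -/
def Rop (M : MarkovChain X) (τ : (ℕ → X) → ℕ∞) (f : X → ℝ≥0∞) (x : X) : ℝ≥0∞ :=
  ∫⁻ ω in {ω | τ ω ≠ ⊤}, ∑ k ∈ Finset.range (τ ω).toNat, f (ω k) ∂M.law x

/-- `𝔼_x τ`, with values in `[0,∞]`. -/
def EtauE (M : MarkovChain X) (τ : (ℕ → X) → ℕ∞) (x : X) : ℝ≥0∞ :=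
  ∫⁻ ω, (τ ω : ℝ≥0∞) ∂M.law x

/-- `μ` is `P`-invariant: `∫ Pf dμ = ∫ f dμ` for every bounded nonnegative borelian `f`. -/
def PInvariant (M : MarkovChain X) (μ : Measure X) : Prop :=
  ∀ f : X → ℝ≥0∞, Measurable f → (∃ C : ℝ≥0∞, C ≠ ⊤ ∧ ∀ x, f x ≤ C) →
    ∫⁻ x, Pop M f x ∂μ = ∫⁻ x, f x ∂μ

/-- `ν` is `Q`-invariant: `∫ Qf dν = ∫ f dν` for every bounded nonnegative borelian `f`. -/
def QInvariant (M : MarkovChain X) (τ : (ℕ → X) → ℕ∞) (ν : Measure X) : Prop :=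
  ∀ f : X → ℝ≥0∞, Measurable f → (∃ C : ℝ≥0∞, C ≠ ⊤ ∧ ∀ x, f x ≤ C) →
    ∫⁻ x, Qop M τ f x ∂ν = ∫⁻ x, f x ∂ν

/-- `ν = S*μ`, i.e. `ν(A) = ∫ S𝟙_A dμ` for every borelian `A`. -/
def SstarEq (M : MarkovChain X) (τ : (ℕ → X) → ℕ∞) (μ ν : Measure X) : Prop :=
  ∀ A : Set X, MeasurableSet A → ν A = ∫⁻ x, Sop M τ (A.indicator 1) x ∂μ

/-- `m = R*ν`, i.e. `m(A) = ∫ R𝟙_A dν` for every borelian `A`. -/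
def RstarEq (M : MarkovChain X) (τ : (ℕ → X) → ℕ∞) (ν m : Measure X) : Prop :=
  ∀ A : Set X, MeasurableSet A → m A = ∫⁻ x, Rop M τ (A.indicator 1) x ∂ν

/-- the real-valued Markov operator -/
def Pr (M : MarkovChain X) (f : X → ℝ) (x : X) : ℝ := ∫ ω, f (ω 1) ∂M.law x

/-- the real-valued induced operator -/
def Qr (M : MarkovChain X) (τ : (ℕ → X) → ℕ∞) (g : X → ℝ) (x : X) : ℝ :=
  ∫ ω in {ω | τ ω ≠ ⊤}, g (ω (τ ω).toNat) ∂M.law x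

/-- the real-valued operator `S` -/
def Sr (M : MarkovChain X) (τ : (ℕ → X) → ℕ∞) (f : X → ℝ) (x : X) : ℝ :=
  ∫ ω in {ω | τ ω = 1}, f (ω 1) ∂M.law x

/-- the real-valued operator `R` -/
def Rr (M : MarkovChain X) (τ : (ℕ → X) → ℕ∞) (f : X → ℝ) (x : X) : ℝ :=
  ∫ ω in {ω | τ ω ≠ ⊤}, ∑ k ∈ Finset.range (τ ω).toNat, f (ω k) ∂M.law x

/-- `𝔼_x τ` as a real number. -/
def Etau (M : MarkovChain X) (τ : (ℕ → X) → ℕ∞) (x : X) : ℝ := (EtauE M τ x).toReal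

/-- `B_u = sup (Pu - u) + 1`. -/
def Bu (M : MarkovChain X) (u : X → ℝ) : ℝ :=
  sSup (Set.range fun x => Pr M u x - u x) + 1

/-- the weight `u - Pu + B_u` defining the space `𝓔_u`. -/
def wE (M : MarkovChain X) (u : X → ℝ) : X → ℝ := fun x => u x - Pr M u x + Bu M u

/-- `u` is a drift function: `u ≥ 1`, `u - Pu` is bounded below and, with
`B_u = sup (Pu - u) + 1`, the functions `Qu`, `𝔼τ/u` and `P(u-Pu+B_u)/(u-Pu+B_u)` are
bounded. -/
structure IsDrift (M : MarkovChain X) (τ : (ℕ → X) → ℕ∞) (u : X → ℝ) : Prop where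
  meas : Measurable u
  one_le : ∀ x, 1 ≤ u x
  int_one : ∀ x, Integrable (fun ω => u (ω 1)) (M.law x)
  bdd : BddAbove (Set.range fun x => Pr M u x - u x)
  etau_ne_top : ∀ x, EtauE M τ x ≠ ⊤
  qu_bdd : ∃ C : ℝ, ∀ x, Qr M τ u x ≤ C
  etau_div_bdd : ∃ C : ℝ, ∀ x, Etau M τ x ≤ C * u x
  pw_bdd : ∃ C : ℝ, ∀ x, Pr M (wE M u) x ≤ C * wE M u x

/-- membership in the weighted space `𝓕^p_v` : `f` is borelian and `|f| ≤ C v^{1/p}`. -/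
def MemWp (v : X → ℝ) (p : ℝ) (f : X → ℝ) : Prop :=
  Measurable f ∧ ∃ C : ℝ, ∀ x, |f x| ≤ C * v x ^ (1 / p)

/-- the norm of the weighted space `𝓕^p_v` : `‖f‖ = sup_x |f(x)|/v(x)^{1/p}`. -/
def normWp (v : X → ℝ) (p : ℝ) (f : X → ℝ) : ℝ := ⨆ x, |f x| / v x ^ (1 / p)

/-- ergodicity among a class of invariant measures: a finite nonzero invariant measure is
ergodic if it is not a nontrivial convex combination of two distinct invariant probability
measures. -/
def ErgodicAmong (Inv : Measure X → Prop) (μ : Measure X) : Prop :=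
  μ ≠ 0 ∧ ∀ (ν₁ ν₂ : Measure X) (t : ℝ≥0∞), Inv ν₁ → Inv ν₂ →
    IsProbabilityMeasure ν₁ → IsProbabilityMeasure ν₂ → 0 < t → t < 1 →
    μ = μ Set.univ • (t • ν₁ + (1 - t) • ν₂) → ν₁ = ν₂



/-!
Put `w = u - Pu + B_u ≥ 1` and `q = 2 + β` with `β = min α 2`. Since `|g| ≲ w^{1/q}`, Jensen's
inequality for the concave map `t ↦ t^{1/q}` and the drift bound `Pw ≲ w` give `|Pg| ≲ w^{1/q}`,
hence `|d_k|^q ≲ w(X_k) + w(X_{k+1})`. By the Markov property `𝔼_x w(X_k)` telescopes: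
`∑_{k<N} 𝔼_x w(X_k) = u(x) - 𝔼_x u(X_N) + N B_u ≤ u(x) + N B_u`, so the partial sums of
`𝔼_x |d_k|^q` grow at most linearly. Each truncated moment is at most a power of `n` times
`𝔼_x |d_n|^q`, and linear growth of these partial sums gives the limit and, by Abel summation,
the two summability statements.
-/

theorem MeasureTheory.Integrable.rpow_of_nonneg {Ω : Type*} [MeasurableSpace Ω] {μ : Measure Ω}
    [IsFiniteMeasure μ] {F : Ω → ℝ} (hF : Integrable F μ) (h0 : ∀ ω, 0 ≤ F ω) {p : ℝ}
    (hp0 : 0 ≤ p) (hp1 : p ≤ 1) : Integrable (fun ω => F ω ^ p) μ := by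
  simpa [Real.norm_of_nonneg (h0 _)] using integrable_norm_rpow_of_le hF.aestronglyMeasurable
    hp0 zero_le_one hp1 (by simpa [Real.norm_of_nonneg (h0 _)] using hF)

theorem summable_div_rpow_of_sum_range_le {W : ℕ → ℝ} {A B s : ℝ} (hs : 1 < s)
    (hW : ∀ n, 0 ≤ W n) (hsum : ∀ N, ∑ n ∈ Finset.range N, W n ≤ A + B * N) :
    Summable fun n : ℕ => W n / (n : ℝ) ^ s := by
  have hO : (fun N ↦ ∑ n ∈ Finset.Icc 1 N, W n) =O[atTop] fun N ↦ (N : ℝ) ^ (1 : ℝ) := by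
    refine Asymptotics.IsBigO.of_bound (|A| + 2 * |B|) ?_
    filter_upwards [eventually_ge_atTop 1] with N hN
    have hN' : (1 : ℝ) ≤ N := by exact_mod_cast hN
    have hIcc : ∑ n ∈ Finset.Icc 1 N, W n ≤ ∑ n ∈ Finset.range (N + 1), W n :=
      Finset.sum_le_sum_of_subset_of_nonneg (fun n hn => by simp at hn ⊢; omega)
        fun n _ _ => hW n
    have hrange := hsum (N + 1)
    rw [Real.norm_of_nonneg (Finset.sum_nonneg fun n _ => hW n), Real.rpow_one,
      Real.norm_of_nonneg (by positivity)]
    push_cast at hrange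
    nlinarith [le_abs_self A, le_abs_self B, abs_nonneg A, abs_nonneg B]
  -- Abel summation, in the form of the convergence criterion for L-series.
  refine (LSeriesSummable_of_sum_norm_bigO_and_nonneg hO hW zero_le_one
    (s := s) (by simpa using hs)).norm.congr fun n => ?_
  rcases eq_or_ne n 0 with rfl | hn
  · simp [Real.zero_rpow (by linarith : s ≠ 0)]
  · simp [hn, abs_of_nonneg (hW n)]

theorem sum_range_add_succ_le {W : ℕ → ℝ} {A B : ℝ} (hW : ∀ n, 0 ≤ W n)
    (hsum : ∀ N, ∑ n ∈ Finset.range N, W n ≤ A + B * N) (N : ℕ) :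
    ∑ n ∈ Finset.range N, (W n + W (n + 1)) ≤ 2 * (A + B) + 2 * B * N := by
  rw [Finset.sum_add_distrib]
  have h₁ := hsum (N + 1)
  have h₂ := hsum (N + 1)
  rw [Finset.sum_range_succ] at h₁
  rw [Finset.sum_range_succ'] at h₂
  push_cast at h₁ h₂
  linarith [hW 0, hW N]

theorem rpow_mul_rpow_le_rpow_add {a x r γ : ℝ} (ha : 0 ≤ a) (hax : a ≤ x) (hγ : 0 ≤ γ)
    (hr : r + γ ≠ 0) : x ^ r * a ^ γ ≤ x ^ (r + γ) := by
  rw [Real.rpow_add' (ha.trans hax) hr]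
  exact mul_le_mul_of_nonneg_left (Real.rpow_le_rpow ha hax hγ)
    (Real.rpow_nonneg (ha.trans hax) r)

section Truncation

variable {Ω : Type*} [MeasurableSpace Ω] {μ : Measure Ω}

theorem integral_le_mul_integral_of_le {F h : Ω → ℝ} {c : ℝ} (hF : Integrable F μ)
    (h0 : ∀ ω, 0 ≤ h ω) (hle : ∀ ω, h ω ≤ c * F ω) : ∫ ω, h ω ∂μ ≤ c * ∫ ω, F ω ∂μ :=
  (integral_mono_of_nonneg (ae_of_all _ h0) (hF.const_mul c) (ae_of_all _ hle)).trans_eq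
    (integral_const_mul _ _)

variable {D : ℕ → Ω → ℝ} {A B β : ℝ}

theorem tendsto_sum_integral_sq_indicator_div (hβ : 0 < β)
    (hint : ∀ k, Integrable (fun ω => |D k ω| ^ (2 + β)) μ)
    (hsum : ∀ N, ∑ k ∈ Finset.range N, ∫ ω, |D k ω| ^ (2 + β) ∂μ ≤ A + B * N)
    {ε : ℝ} (hε : 0 < ε) :
    Tendsto (fun n : ℕ => (∑ k ∈ Finset.range n,
        ∫ ω, (if ε * √n ≤ |D k ω| then D k ω ^ 2 else 0) ∂μ) / n) atTop (𝓝 0) := by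
  have hupper : ∀ n : ℕ, 1 ≤ n → (∑ k ∈ Finset.range n,
      ∫ ω, (if ε * √n ≤ |D k ω| then D k ω ^ 2 else 0) ∂μ) / n
        ≤ (A / n + B) / (ε * √n) ^ β := by
    intro n hn
    have hn0 : (0 : ℝ) < n := by exact_mod_cast hn
    have ha : 0 < ε * √n := by positivity
    have hterm : ∀ k, ∫ ω, (if ε * √n ≤ |D k ω| then D k ω ^ 2 else 0) ∂μ
        ≤ ((ε * √n) ^ β)⁻¹ * ∫ ω, |D k ω| ^ (2 + β) ∂μ := fun k =>
      integral_le_mul_integral_of_le (hint k) (fun ω => by split_ifs <;> positivity)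
        fun ω => by
          split_ifs with h
          · rw [inv_mul_eq_div, le_div_iff₀ (by positivity), ← sq_abs, ← Real.rpow_two]
            exact rpow_mul_rpow_le_rpow_add ha.le h hβ.le (by positivity)
          · positivity
    calc _ ≤ (∑ k ∈ Finset.range n, ((ε * √n) ^ β)⁻¹ * ∫ ω, |D k ω| ^ (2 + β) ∂μ) / n := by
          gcongr with k; exact hterm k
      _ ≤ ((ε * √n) ^ β)⁻¹ * (A + B * n) / n := by
          rw [← Finset.mul_sum]; gcongr; exact hsum n
      _ = (A / n + B) / (ε * √n) ^ β := by field_simp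
  have hlim : Tendsto (fun n : ℕ => (A / n + B) / (ε * √n) ^ β) atTop (𝓝 0) :=
    Tendsto.div_atTop (by simpa using (tendsto_const_div_atTop_nhds_zero_nat A).add_const B)
      ((tendsto_rpow_atTop hβ).comp ((Real.tendsto_sqrt_atTop.comp
        tendsto_natCast_atTop_atTop).const_mul_atTop hε))
  refine tendsto_of_tendsto_of_tendsto_of_le_of_le' tendsto_const_nhds hlim
    (Eventually.of_forall fun n => ?_) ((eventually_ge_atTop 1).mono hupper)
  exact div_nonneg (Finset.sum_nonneg fun k _ => integral_nonneg fun ω => by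
    dsimp only; split_ifs <;> positivity) n.cast_nonneg

theorem summable_integral_abs_indicator_div_sqrt (hβ : 0 < β)
    (hint : ∀ k, Integrable (fun ω => |D k ω| ^ (2 + β)) μ)
    (hsum : ∀ N, ∑ k ∈ Finset.range N, ∫ ω, |D k ω| ^ (2 + β) ∂μ ≤ A + B * N)
    {ε : ℝ} (hε : 0 < ε) :
    Summable fun n : ℕ =>
      (∫ ω, (if ε * √n ≤ |D n ω| then |D n ω| else 0) ∂μ) / √n := by
  refine Summable.of_nonneg_of_le (fun n => div_nonneg (integral_nonneg fun ω => by
    dsimp only; split_ifs <;> positivity) (Real.sqrt_nonneg _)) (fun n => ?_)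
    ((summable_div_rpow_of_sum_range_le (s := 1 + β / 2) (by linarith)
      (fun n => integral_nonneg fun _ => by positivity) hsum).mul_left (ε ^ (1 + β))⁻¹)
  rcases Nat.eq_zero_or_pos n with rfl | hn
  · simp [Real.zero_rpow (by positivity : 1 + β / 2 ≠ 0)]
  have hn0 : (0 : ℝ) < n := by exact_mod_cast hn
  have ha : 0 < ε * √n := by positivity
  have hI : ∫ ω, (if ε * √n ≤ |D n ω| then |D n ω| else 0) ∂μ
      ≤ ((ε * √n) ^ (1 + β))⁻¹ * ∫ ω, |D n ω| ^ (2 + β) ∂μ :=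
    integral_le_mul_integral_of_le (hint n) (fun ω => by split_ifs <;> positivity)
      fun ω => by
        split_ifs with h
        · rw [inv_mul_eq_div, le_div_iff₀ (by positivity)]
          have := rpow_mul_rpow_le_rpow_add (r := 1) (γ := 1 + β) ha.le h (by positivity)
            (by positivity)
          rwa [Real.rpow_one, show 1 + (1 + β) = 2 + β by ring] at this
        · positivity
  have hsplit : (n : ℝ) ^ (1 + β / 2) = √n ^ (1 + β) * √n := by
    rw [show 1 + β / 2 = (2 + β) / 2 by ring, Real.rpow_div_two_eq_sqrt _ hn0.le,
      show 2 + β = (1 + β) + 1 by ring, Real.rpow_add (by positivity), Real.rpow_one]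
  calc _ ≤ ((ε * √n) ^ (1 + β))⁻¹ * (∫ ω, |D n ω| ^ (2 + β) ∂μ) / √n := by gcongr
    _ = (ε ^ (1 + β))⁻¹ * ((∫ ω, |D n ω| ^ (2 + β) ∂μ) / (n : ℝ) ^ (1 + β / 2)) := by
        rw [hsplit, Real.mul_rpow hε.le (Real.sqrt_nonneg _)]
        field_simp

theorem summable_integral_pow_four_indicator_div_sq (hβ : 0 < β) (hβ2 : β ≤ 2)
    (hint : ∀ k, Integrable (fun ω => |D k ω| ^ (2 + β)) μ)
    (hsum : ∀ N, ∑ k ∈ Finset.range N, ∫ ω, |D k ω| ^ (2 + β) ∂μ ≤ A + B * N) :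
    Summable fun n : ℕ =>
      (∫ ω, (if |D n ω| ≤ 1 * √n then D n ω ^ 4 else 0) ∂μ) / (n : ℝ) ^ 2 := by
  refine Summable.of_nonneg_of_le (fun n => div_nonneg (integral_nonneg fun ω => by
    dsimp only; split_ifs <;> positivity) (by positivity)) (fun n => ?_)
    (summable_div_rpow_of_sum_range_le (s := 1 + β / 2) (by linarith)
      (fun n => integral_nonneg fun _ => by positivity) hsum)
  rcases Nat.eq_zero_or_pos n with rfl | hn
  · simp [Real.zero_rpow (by positivity : 1 + β / 2 ≠ 0)]
  have hn0 : (0 : ℝ) < n := by exact_mod_cast hn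
  have hI : ∫ ω, (if |D n ω| ≤ 1 * √n then D n ω ^ 4 else 0) ∂μ
      ≤ √n ^ (2 - β) * ∫ ω, |D n ω| ^ (2 + β) ∂μ :=
    integral_le_mul_integral_of_le (hint n) (fun ω => by split_ifs <;> positivity)
      fun ω => by
        split_ifs with h
        · rw [one_mul] at h
          rw [← (by decide : Even 4).pow_abs, ← Real.rpow_natCast,
            show ((4 : ℕ) : ℝ) = (2 - β) + (2 + β) by push_cast; ring,
            Real.rpow_add' (abs_nonneg _) (by norm_num)]
          exact mul_le_mul_of_nonneg_right (Real.rpow_le_rpow (abs_nonneg _) h (by linarith))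
            (by positivity)
        · positivity
  have hsplit : (n : ℝ) ^ 2 = √n ^ (2 - β) * (n : ℝ) ^ (1 + β / 2) := by
    rw [show 1 + β / 2 = (2 + β) / 2 by ring, Real.rpow_div_two_eq_sqrt _ hn0.le,
      ← Real.rpow_add (by positivity), show 2 - β + (2 + β) = 2 * 2 by ring,
      Real.rpow_mul (Real.sqrt_nonneg _)]
    norm_num [Real.sq_sqrt hn0.le]
  calc _ ≤ √n ^ (2 - β) * (∫ ω, |D n ω| ^ (2 + β) ∂μ) / (n : ℝ) ^ 2 := by gcongr
    _ = (∫ ω, |D n ω| ^ (2 + β) ∂μ) / (n : ℝ) ^ (1 + β / 2) := by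
        rw [hsplit, mul_div_mul_left _ _ (by positivity)]

end Truncation

namespace MarkovChain

variable (M : MarkovChain X)

instance (x : X) : IsProbabilityMeasure (M.law x) := M.prob x

theorem measurable_Pr {f : X → ℝ} (hf : Measurable f) : Measurable (Pr M f) := by
  have : ProbabilityTheory.IsMarkovKernel (⟨M.law, M.meas_law⟩ : ProbabilityTheory.Kernel X _) :=
    ⟨M.prob⟩
  exact (StronglyMeasurable.integral_kernel_prod_right (κ := ⟨M.law, M.meas_law⟩)
    (f := fun _ ω => f (ω 1))
    (hf.comp ((measurable_pi_apply 1).comp measurable_snd)).stronglyMeasurable).measurable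

theorem lintegral_comp_zero (x : X) {f : X → ℝ≥0∞} (hf : Measurable f) :
    ∫⁻ ω, f (ω 0) ∂M.law x = f x := by
  rw [← lintegral_map hf (measurable_pi_apply 0), M.start, lintegral_dirac' x hf]

theorem lintegral_comp_succ (x : X) (k : ℕ) {f : X → ℝ≥0∞} (hf : Measurable f) :
    ∫⁻ ω, f (ω (k + 1)) ∂M.law x = ∫⁻ ω, Pop M f (ω k) ∂M.law x := by
  simpa [add_comm, Pop] using M.markov x k univ MeasurableSet.univ (fun η => f (η 1))
    (hf.comp (measurable_pi_apply 1))

theorem Pop_ofReal {f : X → ℝ} (h0 : ∀ y, 0 ≤ f y) {y : X}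
    (hint : Integrable (fun ω => f (ω 1)) (M.law y)) :
    Pop M (fun z => ENNReal.ofReal (f z)) y = ENNReal.ofReal (Pr M f y) :=
  (ofReal_integral_eq_lintegral_ofReal hint (ae_of_all _ fun _ => h0 _)).symm

theorem Pr_nonneg {f : X → ℝ} (h0 : ∀ y, 0 ≤ f y) (y : X) : 0 ≤ Pr M f y :=
  integral_nonneg fun _ => h0 _

section Telescoping

variable {M} {f : X → ℝ} {c : ℝ}

theorem integral_Pr_comp (hf : Measurable f) (h0 : ∀ y, 0 ≤ f y)
    (hint : ∀ y, Integrable (fun ω => f (ω 1)) (M.law y)) (x : X) (k : ℕ) :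
    ∫ ω, Pr M f (ω k) ∂M.law x = ∫ ω, f (ω (k + 1)) ∂M.law x := by
  have hPf : 0 ≤ᵐ[M.law x] fun ω => Pr M f (ω k) := ae_of_all _ fun ω => Pr_nonneg M h0 (ω k)
  rw [integral_eq_lintegral_of_nonneg_ae hPf
      ((measurable_Pr M hf).comp (measurable_pi_apply k)).aestronglyMeasurable,
    integral_eq_lintegral_of_nonneg_ae (ae_of_all _ fun ω => h0 _)
      (hf.comp (measurable_pi_apply _)).aestronglyMeasurable,
    lintegral_comp_succ M x k hf.ennreal_ofReal]
  simp_rw [Pop_ofReal M h0 (hint _)]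

theorem integrable_comp_of_Pr_le_add (hf : Measurable f) (h0 : ∀ y, 0 ≤ f y)
    (hint : ∀ y, Integrable (fun ω => f (ω 1)) (M.law y))
    (hP : ∀ y, Pr M f y ≤ f y + c) (x : X) (k : ℕ) :
    Integrable (fun ω => f (ω k)) (M.law x) := by
  refine ⟨(hf.comp (measurable_pi_apply k)).aestronglyMeasurable, ?_⟩
  rw [hasFiniteIntegral_iff_ofReal (ae_of_all _ fun ω => h0 _)]
  induction k with
  | zero => rw [lintegral_comp_zero M x hf.ennreal_ofReal]; simp
  | succ k ih =>
    rw [lintegral_comp_succ M x k hf.ennreal_ofReal]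
    calc ∫⁻ ω, Pop M (fun z => ENNReal.ofReal (f z)) (ω k) ∂M.law x
        = ∫⁻ ω, ENNReal.ofReal (Pr M f (ω k)) ∂M.law x := by
          simp_rw [Pop_ofReal M h0 (hint _)]
      _ ≤ ∫⁻ ω, (ENNReal.ofReal (f (ω k)) + ENNReal.ofReal c) ∂M.law x :=
          lintegral_mono fun ω => (ENNReal.ofReal_le_ofReal (hP _)).trans ENNReal.ofReal_add_le
      _ < ⊤ := by
          rw [lintegral_add_right _ measurable_const, lintegral_const, measure_univ, mul_one]
          exact ENNReal.add_lt_top.2 ⟨ih, ENNReal.ofReal_lt_top⟩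

theorem integrable_Pr_comp_of_Pr_le_add (hf : Measurable f) (h0 : ∀ y, 0 ≤ f y)
    (hint : ∀ y, Integrable (fun ω => f (ω 1)) (M.law y))
    (hP : ∀ y, Pr M f y ≤ f y + c) (x : X) (k : ℕ) :
    Integrable (fun ω => Pr M f (ω k)) (M.law x) :=
  ((integrable_comp_of_Pr_le_add hf h0 hint hP x k).add (integrable_const c)).mono'
    ((measurable_Pr M hf).comp (measurable_pi_apply k)).aestronglyMeasurable
    (ae_of_all _ fun ω => by
      rw [Real.norm_of_nonneg (Pr_nonneg M h0 _)]; exact hP _)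

theorem sum_integral_sub_Pr_le (hf : Measurable f) (h0 : ∀ y, 0 ≤ f y)
    (hint : ∀ y, Integrable (fun ω => f (ω 1)) (M.law y))
    (hP : ∀ y, Pr M f y ≤ f y + c) (x : X) (N : ℕ) :
    ∑ k ∈ Finset.range N, ∫ ω, (f (ω k) - Pr M f (ω k)) ∂M.law x ≤ f x := by
  have hI := integrable_comp_of_Pr_le_add hf h0 hint hP x
  calc ∑ k ∈ Finset.range N, ∫ ω, (f (ω k) - Pr M f (ω k)) ∂M.law x
      = ∑ k ∈ Finset.range N, (∫ ω, f (ω k) ∂M.law x - ∫ ω, f (ω (k + 1)) ∂M.law x) :=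
        Finset.sum_congr rfl fun k _ => by
          rw [integral_sub (hI k) (integrable_Pr_comp_of_Pr_le_add hf h0 hint hP x k),
            integral_Pr_comp hf h0 hint]
    _ = ∫ ω, f (ω 0) ∂M.law x - ∫ ω, f (ω N) ∂M.law x := Finset.sum_range_sub' _ _
    _ ≤ f x := by
        rw [integral_eq_lintegral_of_nonneg_ae (ae_of_all _ fun ω => h0 _)
          (hf.comp (measurable_pi_apply 0)).aestronglyMeasurable,
          lintegral_comp_zero M x hf.ennreal_ofReal,
          ENNReal.toReal_ofReal (h0 x)]
        linarith [integral_nonneg (μ := M.law x) (f := fun ω => f (ω N)) fun ω => h0 (ω N)]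

end Telescoping

theorem Pr_rpow_le {v : X → ℝ} {p : ℝ} (h0 : ∀ z, 0 ≤ v z) (hp0 : 0 ≤ p) (hp1 : p ≤ 1) {y : X}
    (hint : Integrable (fun ω => v (ω 1)) (M.law y)) :
    Pr M (fun z => v z ^ p) y ≤ Pr M v y ^ p :=
  (Real.concaveOn_rpow hp0 hp1).le_map_integral (Real.continuous_rpow_const hp0).continuousOn
    isClosed_Ici (ae_of_all _ fun ω => h0 (ω 1)) hint
    (hint.rpow_of_nonneg (fun ω => h0 (ω 1)) hp0 hp1)

theorem abs_Pr_le_mul_Pr_rpow {g v : X → ℝ} {C p : ℝ} (h0 : ∀ z, 0 ≤ v z) (hC : 0 ≤ C)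
    (hp0 : 0 ≤ p) (hp1 : p ≤ 1) (hgv : ∀ z, |g z| ≤ C * v z ^ p) {y : X}
    (hint : Integrable (fun ω => v (ω 1)) (M.law y)) :
    |Pr M g y| ≤ C * Pr M v y ^ p :=
  calc |Pr M g y| ≤ ∫ ω, |g (ω 1)| ∂M.law y := abs_integral_le_integral_abs
    _ ≤ C * Pr M (fun z => v z ^ p) y :=
        integral_le_mul_integral_of_le (hint.rpow_of_nonneg (fun ω => h0 (ω 1)) hp0 hp1)
          (fun _ => abs_nonneg _) fun ω => hgv (ω 1)
    _ ≤ C * Pr M v y ^ p := mul_le_mul_of_nonneg_left (M.Pr_rpow_le h0 hp0 hp1 hint) hC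

end MarkovChain

namespace IsDrift

variable {M : MarkovChain X} {τ : (ℕ → X) → ℕ∞} {u : X → ℝ}

theorem Pr_le_add (hu : IsDrift M τ u) (y : X) : Pr M u y ≤ u y + (Bu M u - 1) := by
  have := le_csSup hu.bdd ⟨y, rfl⟩
  simp only [Bu]
  linarith

theorem nonneg (hu : IsDrift M τ u) (y : X) : 0 ≤ u y := zero_le_one.trans (hu.one_le y)

theorem one_le_wE (hu : IsDrift M τ u) (y : X) : 1 ≤ wE M u y := by
  have := hu.Pr_le_add y
  simp only [wE]
  linarith

theorem integrable_sub_Pr_comp (hu : IsDrift M τ u) (x : X) (k : ℕ) :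
    Integrable (fun ω => u (ω k) - Pr M u (ω k)) (M.law x) :=
  (M.integrable_comp_of_Pr_le_add hu.meas hu.nonneg hu.int_one hu.Pr_le_add x k).sub
    (M.integrable_Pr_comp_of_Pr_le_add hu.meas hu.nonneg hu.int_one hu.Pr_le_add x k)

theorem integrable_wE_comp (hu : IsDrift M τ u) (x : X) (k : ℕ) :
    Integrable (fun ω => wE M u (ω k)) (M.law x) :=
  (hu.integrable_sub_Pr_comp x k).add (integrable_const _)

theorem integral_wE_comp (hu : IsDrift M τ u) (x : X) (k : ℕ) :
    ∫ ω, wE M u (ω k) ∂M.law x = ∫ ω, (u (ω k) - Pr M u (ω k)) ∂M.law x + Bu M u := by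
  simp only [wE]
  rw [integral_add (hu.integrable_sub_Pr_comp x k) (integrable_const _), integral_const,
    probReal_univ, one_smul]

theorem sum_integral_wE_le (hu : IsDrift M τ u) (x : X) (N : ℕ) :
    ∑ k ∈ Finset.range N, ∫ ω, wE M u (ω k) ∂M.law x ≤ u x + Bu M u * N := by
  simp only [hu.integral_wE_comp x, Finset.sum_add_distrib, Finset.sum_const,
    Finset.card_range, nsmul_eq_mul]
  linarith [M.sum_integral_sub_Pr_le hu.meas hu.nonneg hu.int_one hu.Pr_le_add x N]

theorem abs_sub_Pr_rpow_le (hu : IsDrift M τ u) {g : X → ℝ} {C q : ℝ} (hq : 1 ≤ q)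
    (hC : 0 ≤ C) (hgw : ∀ z, |g z| ≤ C * wE M u z ^ (1 / q)) :
    ∃ K, 0 ≤ K ∧ ∀ y y', |g y' - Pr M g y| ^ q ≤ K * (wE M u y + wE M u y') := by
  obtain ⟨C₂, hC₂⟩ := hu.pw_bdd
  set p := 1 / q
  have hp0 : 0 ≤ p := by positivity
  have hp1 : p ≤ 1 := (div_le_one (by linarith)).2 hq
  have hw0 : ∀ z, 0 ≤ wE M u z := fun z => zero_le_one.trans (hu.one_le_wE z)
  have hPg : ∀ y, |Pr M g y| ≤ C * |C₂| ^ p * wE M u y ^ p := fun y =>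
    calc |Pr M g y| ≤ C * Pr M (wE M u) y ^ p :=
          M.abs_Pr_le_mul_Pr_rpow hw0 hC hp0 hp1 hgw (hu.integrable_wE_comp y 1)
      _ ≤ C * (|C₂| * wE M u y) ^ p := by
          gcongr
          · exact M.Pr_nonneg hw0 y
          · exact (hC₂ y).trans (mul_le_mul_of_nonneg_right (le_abs_self _) (hw0 y))
      _ = C * |C₂| ^ p * wE M u y ^ p := by rw [Real.mul_rpow (abs_nonneg _) (hw0 y)]; ring
  refine ⟨(C * (1 + |C₂| ^ p)) ^ q, by positivity, fun y y' => ?_⟩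
  have hs0 : 0 ≤ wE M u y + wE M u y' := add_nonneg (hw0 y) (hw0 y')
  have hd : |g y' - Pr M g y| ≤ C * (1 + |C₂| ^ p) * (wE M u y + wE M u y') ^ p :=
    calc |g y' - Pr M g y| ≤ |g y'| + |Pr M g y| := abs_sub _ _
      _ ≤ C * wE M u y' ^ p + C * |C₂| ^ p * wE M u y ^ p := add_le_add (hgw y') (hPg y)
      _ ≤ C * (wE M u y + wE M u y') ^ p + C * |C₂| ^ p * (wE M u y + wE M u y') ^ p := by
          gcongr
          · exact hw0 y'
          · linarith [hw0 y]
          · exact hw0 y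
          · linarith [hw0 y']
      _ = C * (1 + |C₂| ^ p) * (wE M u y + wE M u y') ^ p := by ring
  calc |g y' - Pr M g y| ^ q
      ≤ (C * (1 + |C₂| ^ p) * (wE M u y + wE M u y') ^ p) ^ q :=
        Real.rpow_le_rpow (abs_nonneg _) hd (by linarith)
    _ = (C * (1 + |C₂| ^ p)) ^ q * (wE M u y + wE M u y') := by
        rw [Real.mul_rpow (by positivity) (by positivity), ← Real.rpow_mul hs0,
          one_div_mul_cancel (by linarith), Real.rpow_one]

theorem exists_sum_integral_rpow_le (hu : IsDrift M τ u) {g : X → ℝ} (hg : Measurable g)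
    {C q : ℝ} (hq : 1 ≤ q) (hC : 0 ≤ C) (hgw : ∀ z, |g z| ≤ C * wE M u z ^ (1 / q)) (x : X) :
    ∃ A B : ℝ,
      (∀ k, Integrable (fun ω => |g (ω (k + 1)) - Pr M g (ω k)| ^ q) (M.law x)) ∧
      ∀ N, ∑ k ∈ Finset.range N, ∫ ω, |g (ω (k + 1)) - Pr M g (ω k)| ^ q ∂M.law x
        ≤ A + B * N := by
  obtain ⟨K, hK0, hK⟩ := hu.abs_sub_Pr_rpow_le hq hC hgw
  have hW : ∀ k, Integrable (fun ω => wE M u (ω k) + wE M u (ω (k + 1))) (M.law x) := fun k =>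
    (hu.integrable_wE_comp x k).add (hu.integrable_wE_comp x (k + 1))
  have hint : ∀ k, Integrable (fun ω => |g (ω (k + 1)) - Pr M g (ω k)| ^ q) (M.law x) :=
    fun k => ((hW k).const_mul K).mono'
      (((hg.comp (measurable_pi_apply _)).sub ((M.measurable_Pr hg).comp
        (measurable_pi_apply _))).abs.pow_const q).aestronglyMeasurable
      (ae_of_all _ fun ω => by
        rw [Real.norm_of_nonneg (by positivity)]; exact hK (ω k) (ω (k + 1)))
  refine ⟨K * (2 * (u x + Bu M u)), K * (2 * Bu M u), hint, fun N => ?_⟩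
  have hw0 : ∀ k, 0 ≤ ∫ ω, wE M u (ω k) ∂M.law x := fun k =>
    integral_nonneg fun ω => zero_le_one.trans (hu.one_le_wE (ω k))
  calc ∑ k ∈ Finset.range N, ∫ ω, |g (ω (k + 1)) - Pr M g (ω k)| ^ q ∂M.law x
      ≤ ∑ k ∈ Finset.range N,
          K * (∫ ω, wE M u (ω k) ∂M.law x + ∫ ω, wE M u (ω (k + 1)) ∂M.law x) :=
        Finset.sum_le_sum fun k _ => by
          rw [← integral_add (hu.integrable_wE_comp x k) (hu.integrable_wE_comp x (k + 1))]
          exact integral_le_mul_integral_of_le (hW k) (fun _ => by positivity)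
            fun ω => hK (ω k) (ω (k + 1))
    _ ≤ K * (2 * (u x + Bu M u) + 2 * Bu M u * N) := by
        rw [← Finset.mul_sum]
        exact mul_le_mul_of_nonneg_left
          (sum_range_add_succ_le hw0 (hu.sum_integral_wE_le x) N) hK0
    _ = K * (2 * (u x + Bu M u)) + K * (2 * Bu M u) * N := by ring

end IsDrift

theorem stmt13_general (M : MarkovChain X) (τ : (ℕ → X) → ℕ∞)
    (u : X → ℝ) (hu : IsDrift M τ u) (α : ℝ) (hα : 0 < α)
    (g : X → ℝ) (hg : MemWp (wE M u) (2 + α) g) (x : X)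
    (d : ℕ → (ℕ → X) → ℝ) (hd : d = fun k ω => g (ω (k + 1)) - Pr M g (ω k)) :
    (∀ ε : ℝ, 0 < ε → Tendsto (fun n : ℕ =>
        (∑ k ∈ Finset.range n,
          ∫ ω, (if ε * Real.sqrt n ≤ |d k ω| then d k ω ^ 2 else 0) ∂M.law x) / (n : ℝ))
        atTop (𝓝 0)) ∧
    (∀ ε : ℝ, 0 < ε → Summable (fun n : ℕ =>
        (∫ ω, (if ε * Real.sqrt n ≤ |d n ω| then |d n ω| else 0) ∂M.law x) /
          Real.sqrt n)) ∧
    (∃ δ : ℝ, 0 < δ ∧ Summable (fun n : ℕ =>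
        (∫ ω, (if |d n ω| ≤ δ * Real.sqrt n then d n ω ^ 4 else 0) ∂M.law x) /
          (n : ℝ) ^ 2)) := by
  obtain ⟨hgm, C, hC⟩ := hg
  -- `β ≤ 2` is what the fourth-moment truncation needs; as `w ≥ 1`, `𝓔^{2+α} ⊆ 𝓔^{2+β}`.
  set β := min α 2
  have hβ : 0 < β := lt_min hα two_pos
  have hgw : ∀ z, |g z| ≤ |C| * wE M u z ^ (1 / (2 + β)) := fun z =>
    (hC z).trans (mul_le_mul (le_abs_self C)
      (Real.rpow_le_rpow_of_exponent_le (hu.one_le_wE z)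
        (one_div_le_one_div_of_le (by positivity) (by linarith [min_le_left α 2])))
      (Real.rpow_nonneg (zero_le_one.trans (hu.one_le_wE z)) _) (abs_nonneg C))
  obtain ⟨A, B, hint, hsum⟩ :=
    hu.exists_sum_integral_rpow_le hgm (by linarith) (abs_nonneg C) hgw x
  subst hd
  exact ⟨fun ε hε => tendsto_sum_integral_sq_indicator_div hβ hint hsum hε,
    fun ε hε => summable_integral_abs_indicator_div_sqrt hβ hint hsum hε,
    1, one_pos, summable_integral_pow_four_indicator_div_sq hβ (min_le_right α 2) hint hsum⟩

/-- Lemma 3.4 (Lindeberg-type conditions): for a drift function `u`, `α > 0`,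
`g ∈ 𝓔^{2+α}_u` and any `x`, writing `d_k = g(X_{k+1}) - Pg(X_k)`, we have:
`(1/n) ∑_{k<n} 𝔼_x(d_k² 𝟙_{|d_k| ≥ ε√n}) → 0`,
`∑_n n^{-1/2} 𝔼_x(|d_n| 𝟙_{|d_n| ≥ ε√n}) < ∞`, and there is `δ > 0` with
`∑_n n^{-2} 𝔼_x(d_n⁴ 𝟙_{|d_n| ≤ δ√n}) < ∞`. -/
theorem stmt13 (M : MarkovChain X) (τ : (ℕ → X) → ℕ∞)
    (hst : IsPathStoppingTime τ) (hθ : ThetaCompatible M τ)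
    (u : X → ℝ) (hu : IsDrift M τ u) (α : ℝ) (hα : 0 < α)
    (g : X → ℝ) (hg : MemWp (wE M u) (2 + α) g) (x : X)
    (d : ℕ → (ℕ → X) → ℝ) (hd : d = fun k ω => g (ω (k + 1)) - Pr M g (ω k)) :
    (∀ ε : ℝ, 0 < ε → Tendsto (fun n : ℕ =>
        (∑ k ∈ Finset.range n,
          ∫ ω, (if ε * Real.sqrt n ≤ |d k ω| then d k ω ^ 2 else 0) ∂M.law x) / (n : ℝ))
        atTop (𝓝 0)) ∧
    (∀ ε : ℝ, 0 < ε → Summable (fun n : ℕ =>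
        (∫ ω, (if ε * Real.sqrt n ≤ |d n ω| then |d n ω| else 0) ∂M.law x) /
          Real.sqrt n)) ∧
    (∃ δ : ℝ, 0 < δ ∧ Summable (fun n : ℕ =>
        (∫ ω, (if |d n ω| ≤ δ * Real.sqrt n then d n ω ^ 4 else 0) ∂M.law x) /
          (n : ℝ) ^ 2)) :=
  stmt13_general M τ u hu α hα g hg x d hd

end
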